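/- arXiv:1809.08176 — 5 statements merged into one kernel-verified Lean document; each statement's English description precedes it below -/
import Mathlib

section
/- In a residuated lattice satisfying the double negation law, (L, ∧, ⊕, 1, 0) is a commutative semiring, i.e., (L,∧,1) and (L,⊕,0) are commutative monoids, x ⊕ (y ∧ z) = (x ⊕ y) ∧ (x ⊕ z), and x ⊕ 1 = 1. -/
/-- A residuated lattice: a bounded lattice with least element `0` and greatest
element `1`, a commutative monoid structure `(⊗, 1)` (written `*`), and an
implication `himp` satisfying the adjointness property
`x ≤ y → z ↔ x ⊗ y ≤ z`. -/
class ResidLattice (L : Type*) extends Lattice L, CommMonoid L, Zero L where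
  zero_le : ∀ x : L, 0 ≤ x
  le_one : ∀ x : L, x ≤ 1
  himp : L → L → L
  adjoint : ∀ x y z : L, x ≤ himp y z ↔ x * y ≤ z

/-- Negation `¬x := x → 0`. -/
def rneg {L : Type*} [ResidLattice L] (x : L) : L := ResidLattice.himp x 0

/-- `x ⊕ y := ¬(¬x ⊗ ¬y)`. -/
def oplus {L : Type*} [ResidLattice L] (x y : L) : L := rneg (rneg x * rneg y)


section Aux
variable {L : Type*} [ResidLattice L]

open ResidLattice

lemma rl_mul_le_mul_left {a b : L} (c : L) (h : a ≤ b) : c * a ≤ c * b := by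
  have h1 : b ≤ himp c (c * b) := (adjoint _ _ _).2 (le_of_eq (mul_comm b c))
  have h2 : a ≤ himp c (c * b) := le_trans h h1
  have := (adjoint _ _ _).1 h2
  calc c * a = a * c := mul_comm _ _
    _ ≤ c * b := this

lemma rl_mul_sup (a b c : L) : a * (b ⊔ c) = a * b ⊔ a * c := by
  apply le_antisymm
  · have hb : b ≤ himp a (a * b ⊔ a * c) :=
      (adjoint _ _ _).2 (le_trans (le_of_eq (mul_comm b a)) le_sup_left)
    have hc : c ≤ himp a (a * b ⊔ a * c) :=
      (adjoint _ _ _).2 (le_trans (le_of_eq (mul_comm c a)) le_sup_right)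
    have := (adjoint _ _ _).1 (sup_le hb hc)
    calc a * (b ⊔ c) = (b ⊔ c) * a := mul_comm _ _
      _ ≤ _ := this
  · exact sup_le (rl_mul_le_mul_left a le_sup_left) (rl_mul_le_mul_left a le_sup_right)

lemma rl_rneg_mul_self (a : L) : rneg a * a ≤ 0 :=
  (adjoint _ _ _).1 (le_refl (rneg a))

lemma rl_mul_zero (x : L) : x * 0 = 0 := by
  apply le_antisymm
  · calc x * 0 = 0 * x := mul_comm _ _
      _ ≤ 0 * 1 := rl_mul_le_mul_left 0 (le_one x)
      _ = 0 := mul_one 0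
  · exact zero_le _

lemma rl_rneg_zero : (rneg (0 : L)) = 1 := by
  apply le_antisymm (le_one _)
  exact (adjoint _ _ _).2 (le_of_eq (by rw [one_mul]))

lemma rl_rneg_antitone {a b : L} (h : a ≤ b) : rneg b ≤ rneg a := by
  apply (adjoint _ _ _).2
  calc rneg b * a ≤ rneg b * b := rl_mul_le_mul_left _ h
    _ ≤ 0 := rl_rneg_mul_self b

lemma rl_rneg_sup (a b : L) : rneg (a ⊔ b) = rneg a ⊓ rneg b := by
  apply le_antisymm
  · exact le_inf (rl_rneg_antitone le_sup_left) (rl_rneg_antitone le_sup_right)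
  · apply (adjoint _ _ _).2
    rw [rl_mul_sup]
    apply sup_le
    · calc (rneg a ⊓ rneg b) * a ≤ rneg a * a := by
            rw [mul_comm, mul_comm (rneg a)]; exact rl_mul_le_mul_left a inf_le_left
        _ ≤ 0 := rl_rneg_mul_self a
    · calc (rneg a ⊓ rneg b) * b ≤ rneg b * b := by
            rw [mul_comm, mul_comm (rneg b)]; exact rl_mul_le_mul_left b inf_le_right
        _ ≤ 0 := rl_rneg_mul_self b

lemma rl_rneg_inf (dn : ∀ x : L, rneg (rneg x) = x) (a b : L) :
    rneg (a ⊓ b) = rneg a ⊔ rneg b := by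
  have h := rl_rneg_sup (rneg a) (rneg b)
  rw [dn, dn] at h
  rw [← h, dn]

end Aux

theorem stmt12 {L : Type*} [ResidLattice L]
    (dn : ∀ x : L, rneg (rneg x) = x) :
    (∀ x y : L, x ⊓ y = y ⊓ x) ∧
    (∀ x y z : L, (x ⊓ y) ⊓ z = x ⊓ (y ⊓ z)) ∧
    (∀ x : L, x ⊓ 1 = x) ∧
    (∀ x y : L, oplus x y = oplus y x) ∧
    (∀ x y z : L, oplus (oplus x y) z = oplus x (oplus y z)) ∧
    (∀ x : L, oplus x 0 = x) ∧
    (∀ x y z : L, oplus x (y ⊓ z) = oplus x y ⊓ oplus x z) ∧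
    (∀ x : L, oplus x 1 = 1) := by
  have mz : ∀ x : L, x * (0:L) = 0 := rl_mul_zero
  refine ⟨fun x y => inf_comm x y, fun x y z => inf_assoc x y z,
    fun x => inf_eq_left.2 (ResidLattice.le_one x), ?_, ?_, ?_, ?_, ?_⟩
  · intro x y; unfold oplus; rw [mul_comm]
  · intro x y z; unfold oplus; rw [dn, dn, mul_assoc]
  · intro x; unfold oplus; rw [rl_rneg_zero, mul_one, dn]
  · intro x y z
    unfold oplus
    rw [rl_rneg_inf dn, rl_mul_sup, rl_rneg_sup]
  · intro x
    unfold oplus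
    have : rneg (1:L) = 0 := by
      apply le_antisymm _ (ResidLattice.zero_le _)
      calc rneg (1:L) = rneg 1 * 1 := (mul_one _).symm
        _ ≤ 0 := rl_rneg_mul_self 1
    rw [this, mz, rl_rneg_zero]
end

section
/- Given a general coupled semiring ((A,∨,·,0,1),(A,∧,∗,1,0),α), defining x → y := α(x) ∗ y yields a residuated lattice (A,∨,∧,·,→,0,1) satisfying the double negation law, in which ¬x = α(x). -/
/-- A general coupled semiring on a lattice `A`: two commutative semirings
`(A, ⊔, mul, zero, one)` and `(A, ⊓, star, one, zero)` together with an
involutive semiring isomorphism `α` from the first to the second, such that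
`x ≤ y ↔ star (α x) y = one`. -/
structure GCS (A : Type*) [Lattice A] where
  mul : A → A → A
  star : A → A → A
  zero : A
  one : A
  -- `(A, ⊔, mul, zero, one)` is a commutative semiring
  sup_zero : ∀ x : A, x ⊔ zero = x
  mul_comm : ∀ x y : A, mul x y = mul y x
  mul_assoc : ∀ x y z : A, mul (mul x y) z = mul x (mul y z)
  mul_one : ∀ x : A, mul x one = x
  mul_sup : ∀ x y z : A, mul x (y ⊔ z) = mul x y ⊔ mul x z
  mul_zero : ∀ x : A, mul x zero = zero
  -- `(A, ⊓, star, one, zero)` is a commutative semiring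
  inf_one : ∀ x : A, x ⊓ one = x
  star_comm : ∀ x y : A, star x y = star y x
  star_assoc : ∀ x y z : A, star (star x y) z = star x (star y z)
  star_zero : ∀ x : A, star x zero = x
  star_inf : ∀ x y z : A, star x (y ⊓ z) = star x y ⊓ star x z
  star_one : ∀ x : A, star x one = one
  -- `α` is an involutive semiring isomorphism from the first to the second
  α : A → A
  α_bij : Function.Bijective α
  α_sup : ∀ x y : A, α (x ⊔ y) = α x ⊓ α y
  α_mul : ∀ x y : A, α (mul x y) = star (α x) (α y)
  α_zero : α zero = one
  α_one : α one = zero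
  α_invol : ∀ x : A, α (α x) = x
  -- coupling condition
  le_iff : ∀ x y : A, x ≤ y ↔ star (α x) y = one

/-- Derived implication `x → y := α(x) ∗ y`. -/
def GCS.himp {A : Type*} [Lattice A] (C : GCS A) (x y : A) : A := C.star (C.α x) y

/-- Derived negation `¬x := x → 0`. -/
def GCS.neg {A : Type*} [Lattice A] (C : GCS A) (x : A) : A := C.himp x C.zero

/-- A general coupled semiring yields a residuated lattice satisfying the
double negation law, with `¬x = α x`. -/
theorem stmt14 {A : Type*} [Lattice A] (C : GCS A) :
    (∀ x : A, C.zero ≤ x) ∧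
    (∀ x : A, x ≤ C.one) ∧
    (∀ x y z : A, x ≤ C.himp y z ↔ C.mul x y ≤ z) ∧
    (∀ x : A, C.neg (C.neg x) = x) ∧
    (∀ x : A, C.neg x = C.α x) := by
  have hneg : ∀ x : A, C.neg x = C.α x := fun x => by
    simp [GCS.neg, GCS.himp, C.star_zero]
  refine ⟨fun x => ?_, fun x => ?_, fun x y z => ?_, fun x => ?_, hneg⟩
  · rw [C.le_iff, C.α_zero, C.star_comm, C.star_one]
  · rw [C.le_iff, C.star_one]
  · rw [C.le_iff, C.le_iff, GCS.himp, C.α_mul, C.star_assoc]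
  · rw [hneg, hneg, C.α_invol]
end

section
/- Given a general coupled semiring, the adjointness property holds for the derived operations: for all a, b, c in A, a·b ≤ c if and only if a ≤ α(b) ∗ c. -/
/-- Adjointness for the derived operations of a general coupled semiring. -/
theorem stmt15 {A : Type*} [Lattice A] (C : GCS A) (a b c : A) :
    C.mul a b ≤ c ↔ a ≤ C.star (C.α b) c := by
  rw [C.le_iff, C.le_iff, C.α_mul, C.star_assoc]
end

section
/- The correspondence L ↦ C(L) from residuated lattices with double negation to general coupled semirings, and C ↦ L(C) in the other direction, are mutually inverse: for a residuated lattice L satisfying the double negation law, L(C(L)) = L; i.e., the implication recovered from the coupled semiring C(L) via x ⇒ y := ¬x ⊕ y coincides with the original implication →. -/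
/-- `L(C(L)) = L`: the implication recovered from the coupled semiring `C(L)`
via `x ⇒ y := ¬x ⊕ y` coincides with the original implication. -/
theorem stmt16 {L : Type*} [ResidLattice L]
    (dn : ∀ x : L, rneg (rneg x) = x) (a b : L) :
    oplus (rneg a) b = ResidLattice.himp a b := by
  have key : ∀ x : L, x ≤ rneg (a * rneg b) ↔ x ≤ ResidLattice.himp a b := by
    intro x
    unfold rneg
    rw [ResidLattice.adjoint x (a * ResidLattice.himp b 0) 0,
        ResidLattice.adjoint x a b, ← mul_assoc,
        ← ResidLattice.adjoint (x * a) (ResidLattice.himp b 0) 0]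
    have : ResidLattice.himp (ResidLattice.himp b 0) 0 = b := dn b
    rw [this]
  have h : oplus (rneg a) b = rneg (a * rneg b) := by
    unfold oplus
    rw [dn a]
  rw [h]
  exact le_antisymm ((key _).mp le_rfl) ((key _).mpr le_rfl)
end

section
/- Given a tied semiring ((A,∨,·,0,1),(B,∧,∗,1,0),α) and defining x → y := α(x) ∗ y for x, y ∈ B, the structure (B,∨,∧,·,→,0,1) is a residuated lattice satisfying the double negation law, with ¬x = α(x) for all x ∈ B; in particular, B is closed under ∨ and · since a ∨ b = α(α(a) ∧ α(b)) and a·b = α(α(a) ∗ α(b)). -/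
/-- A tied semiring: a commutative semiring `(A, ⊔, mul, zero, one)` on a
lattice `A`, a subset `B ⊆ A` carrying a commutative semiring
`(B, ⊓, star, one, zero)`, and a map `α` which is a homomorphism from the
first semiring onto `B`, whose restriction to `B` is a homomorphism back into
the first semiring, is involutive on `B`, and satisfies
`x ≤ y ↔ star (α x) y = one` for `x, y ∈ B`. -/
structure Tied (A : Type*) [Lattice A] where
  B : Set A
  mul : A → A → A
  star : A → A → A
  zero : A
  one : A
  -- `(A, ⊔, mul, zero, one)` is a commutative semiring
  sup_zero : ∀ x : A, x ⊔ zero = x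
  mul_comm : ∀ x y : A, mul x y = mul y x
  mul_assoc : ∀ x y z : A, mul (mul x y) z = mul x (mul y z)
  mul_one : ∀ x : A, mul x one = x
  mul_sup : ∀ x y z : A, mul x (y ⊔ z) = mul x y ⊔ mul x z
  mul_zero : ∀ x : A, mul x zero = zero
  -- `(B, ⊓, star, one, zero)` is a commutative semiring
  zero_mem : zero ∈ B
  one_mem : one ∈ B
  inf_mem : ∀ x ∈ B, ∀ y ∈ B, x ⊓ y ∈ B
  star_mem : ∀ x ∈ B, ∀ y ∈ B, star x y ∈ B
  inf_one : ∀ x ∈ B, x ⊓ one = x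
  star_comm : ∀ x ∈ B, ∀ y ∈ B, star x y = star y x
  star_assoc : ∀ x ∈ B, ∀ y ∈ B, ∀ z ∈ B, star (star x y) z = star x (star y z)
  star_zero : ∀ x ∈ B, star x zero = x
  star_inf : ∀ x ∈ B, ∀ y ∈ B, ∀ z ∈ B, star x (y ⊓ z) = star x y ⊓ star x z
  star_one : ∀ x ∈ B, star x one = one
  -- `α` is a homomorphism from `(A,∨,·,0,1)` onto `(B,∧,∗,1,0)`
  α : A → A
  α_mem : ∀ x : A, α x ∈ B
  α_surj : ∀ y ∈ B, ∃ x : A, α x = y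
  α_sup : ∀ x y : A, α (x ⊔ y) = α x ⊓ α y
  α_mul : ∀ x y : A, α (mul x y) = star (α x) (α y)
  α_zero : α zero = one
  α_one : α one = zero
  -- `α` restricted to `B` is a homomorphism from `(B,∧,∗,1,0)` to `(A,∨,·,0,1)`
  α_inf : ∀ x ∈ B, ∀ y ∈ B, α (x ⊓ y) = α x ⊔ α y
  α_star : ∀ x ∈ B, ∀ y ∈ B, α (star x y) = mul (α x) (α y)
  -- `α` is involutive on `B`
  α_invol : ∀ x ∈ B, α (α x) = x
  -- coupling condition on `B`
  le_iff : ∀ x ∈ B, ∀ y ∈ B, (x ≤ y ↔ star (α x) y = one)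

/-- Derived implication `x → y := α(x) ∗ y`. -/
def Tied.himp {A : Type*} [Lattice A] (Y : Tied A) (x y : A) : A := Y.star (Y.α x) y

/-- Derived negation `¬x := x → 0`. -/
def Tied.neg {A : Type*} [Lattice A] (Y : Tied A) (x : A) : A := Y.himp x Y.zero

/-- Given a tied semiring, `(B, ∨, ∧, ·, →, 0, 1)` is a residuated lattice
satisfying the double negation law, with `¬x = α x`; in particular `B` is
closed under `∨` and `·` since `a ∨ b = α (α a ⊓ α b)` and
`a · b = α (α a ∗ α b)`. -/
theorem stmt19 {A : Type*} [Lattice A] (Y : Tied A) :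
    -- closure of `B` under `∨` and `·`, via the stated identities
    (∀ a ∈ Y.B, ∀ b ∈ Y.B, a ⊔ b = Y.α (Y.α a ⊓ Y.α b) ∧ a ⊔ b ∈ Y.B) ∧
    (∀ a ∈ Y.B, ∀ b ∈ Y.B, Y.mul a b = Y.α (Y.star (Y.α a) (Y.α b)) ∧
      Y.mul a b ∈ Y.B) ∧
    (∀ a ∈ Y.B, ∀ b ∈ Y.B, Y.himp a b ∈ Y.B) ∧
    -- `(B, ∨, ∧, 0, 1)` is a bounded lattice
    (∀ x ∈ Y.B, Y.zero ≤ x ∧ x ≤ Y.one) ∧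
    -- adjointness on `B`
    (∀ a ∈ Y.B, ∀ b ∈ Y.B, ∀ c ∈ Y.B, (Y.mul a b ≤ c ↔ a ≤ Y.himp b c)) ∧
    -- `¬x = α x` and the double negation law on `B`
    (∀ a ∈ Y.B, Y.neg a = Y.α a) ∧
    (∀ a ∈ Y.B, Y.neg (Y.neg a) = a) := by
  
  have hsup : ∀ a ∈ Y.B, ∀ b ∈ Y.B, a ⊔ b = Y.α (Y.α a ⊓ Y.α b) ∧ a ⊔ b ∈ Y.B := by
    intro a ha b hb
    have h : Y.α (Y.α a ⊓ Y.α b) = a ⊔ b := by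
      rw [Y.α_inf _ (Y.α_mem a) _ (Y.α_mem b), Y.α_invol a ha, Y.α_invol b hb]
    exact ⟨h.symm, h ▸ Y.α_mem _⟩
  have hmul : ∀ a ∈ Y.B, ∀ b ∈ Y.B,
      Y.mul a b = Y.α (Y.star (Y.α a) (Y.α b)) ∧ Y.mul a b ∈ Y.B := by
    intro a ha b hb
    have h : Y.α (Y.star (Y.α a) (Y.α b)) = Y.mul a b := by
      rw [Y.α_star _ (Y.α_mem a) _ (Y.α_mem b), Y.α_invol a ha, Y.α_invol b hb]
    exact ⟨h.symm, h ▸ Y.α_mem _⟩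
  refine ⟨hsup, hmul, ?_, ?_, ?_, ?_, ?_⟩
  · intro a ha b hb
    exact Y.star_mem _ (Y.α_mem a) _ hb
  · intro x hx
    constructor
    · rw [Y.le_iff _ Y.zero_mem _ hx, Y.α_zero,
        Y.star_comm _ Y.one_mem _ hx, Y.star_one _ hx]
    · rw [Y.le_iff _ hx _ Y.one_mem, Y.star_one _ (Y.α_mem x)]
  · intro a ha b hb c hc
    have hmem := (hmul a ha b hb).2
    have hhimp : Y.himp b c ∈ Y.B := Y.star_mem _ (Y.α_mem b) _ hc
    rw [Y.le_iff _ hmem _ hc, Y.le_iff _ ha _ hhimp, Tied.himp,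
      Y.α_mul, Y.star_assoc _ (Y.α_mem a) _ (Y.α_mem b) _ hc]
  · intro a ha
    exact Y.star_zero _ (Y.α_mem a)
  · intro a ha
    have h : Y.neg a = Y.α a := Y.star_zero _ (Y.α_mem a)
    rw [h, show Y.neg (Y.α a) = Y.α (Y.α a) from Y.star_zero _ (Y.α_mem _),
      Y.α_invol a ha]
end
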